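/- arXiv:1307.0857 — 4 statements merged into one kernel-verified Lean document; each statement's English description precedes it below -/
import Mathlib

section
/- Let f : F_2^n → F_2^n be a Boolean network and let I_f be the ideal of the ring B of functions F_2^n → F_2 generated by m_f(x) = 1 + ∏_{i=1}^n (f_i(x) + x_i + 1). Then the F_2-dimension of the quotient B / I_f equals the number of fixed points of f. -/
/-!
Over `𝔽₂`, the factor `f x i + x i + 1` is `1` exactly when `f x i = x i`, so `m_f` is the
indicator function of the set of non-fixed points. In the ring of functions `X → K` the ideal
generated by the indicator of `sᶜ` is the kernel of restriction to `s`, so the quotient is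
`s → K`, of dimension `#s`.
-/

/-- The polynomial `m_f` associated to a Boolean network `f`. -/
def mf {n : ℕ} (f : (Fin n → ZMod 2) → (Fin n → ZMod 2)) (x : Fin n → ZMod 2) : ZMod 2 :=
  1 + ∏ i, (f x i + x i + 1)

section Restrict

variable {X : Type*} (K : Type*) [CommRing K] (s : Set X)

def restrictAlgHom : (X → K) →ₐ[K] (s → K) :=
  AlgHom.pi fun i => Pi.evalAlgHom K (fun _ => K) i.1

@[simp]
theorem restrictAlgHom_apply (g : X → K) : restrictAlgHom K s g = s.domRestrict g :=
  rfl

theorem restrictAlgHom_surjective : Function.Surjective (restrictAlgHom K s) := by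
  classical
  intro h
  exact ⟨fun x => if hx : x ∈ s then h ⟨x, hx⟩ else 0, funext fun i => dif_pos i.2⟩

theorem ker_restrictAlgHom : RingHom.ker (restrictAlgHom K s) = Ideal.span {sᶜ.indicator 1} := by
  ext g
  rw [RingHom.mem_ker, Ideal.mem_span_singleton', restrictAlgHom_apply]
  constructor
  · intro hg
    refine ⟨g, funext fun x => ?_⟩
    by_cases hx : x ∈ s
    · simpa [hx, eq_comm] using congrFun hg ⟨x, hx⟩
    · simp [hx]
  · rintro ⟨c, rfl⟩
    funext i
    simp [Set.domRestrict_apply, i.2]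

theorem finrank_quotient_span_indicator_compl [Nontrivial K] [Finite s] :
    Module.finrank K ((X → K) ⧸ Ideal.span {sᶜ.indicator (1 : X → K)}) = Nat.card s := by
  have := Fintype.ofFinite s
  rw [← ker_restrictAlgHom,
    (Ideal.quotientKerAlgEquivOfSurjective (restrictAlgHom_surjective K s)).toLinearEquiv.finrank_eq,
    Module.finrank_fintype_fun_eq_card, Nat.card_eq_fintype_card]

end Restrict

theorem ZMod.two_add_add_one (a b : ZMod 2) : a + b + 1 = if a = b then 1 else 0 := by
  revert a b
  decide

theorem mf_eq_indicator {n : ℕ} (f : (Fin n → ZMod 2) → (Fin n → ZMod 2)) :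
    mf f = {x | f x = x}ᶜ.indicator 1 := by
  funext x
  simp only [mf, ZMod.two_add_add_one, Fintype.prod_boole, ← funext_iff]
  by_cases hx : f x = x
  · simp [hx]; decide
  · simp [hx]

theorem stmt_5 (n : ℕ) (f : (Fin n → ZMod 2) → (Fin n → ZMod 2)) :
    Module.finrank (ZMod 2)
      (((Fin n → ZMod 2) → ZMod 2) ⧸ Ideal.span {mf f}) =
      Nat.card {x : Fin n → ZMod 2 // f x = x} := by
  rw [mf_eq_indicator, finrank_quotient_span_indicator_compl]
  rfl
end

section
/- Let f be a Boolean network on n nodes. Then f has exactly two fixed points if and only if the quotient B / I_f of the ring of Boolean functions by the ideal generated by m_f has exactly 4 elements. -/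
section ZeroLocus

variable {X K : Type*} [Field K] (m : X → K)

def zeroLocusRestrict : (X → K) →+* ({x // m x = 0} → K) :=
  RingHom.pi fun x => Pi.evalRingHom (fun _ => K) x.1

theorem zeroLocusRestrict_surjective : Function.Surjective (zeroLocusRestrict m) := fun g =>
  ⟨Function.extend Subtype.val g 0, funext fun x => Subtype.val_injective.extend_apply g 0 x⟩

-- Off the zero locus `m` is invertible, so a function vanishing on it is `(g * m⁻¹) * m`.
theorem ker_zeroLocusRestrict : RingHom.ker (zeroLocusRestrict m) = Ideal.span {m} := by
  ext g
  rw [RingHom.mem_ker, Ideal.mem_span_singleton']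
  constructor
  · intro hg
    refine ⟨g * m⁻¹, funext fun x => ?_⟩
    by_cases hx : m x = 0
    · simp [hx, show g x = 0 from congrFun hg ⟨x, hx⟩]
    · simp [hx]
  · rintro ⟨a, rfl⟩
    funext x
    simp [zeroLocusRestrict, x.2]

noncomputable def quotientSpanEquivZeroLocusFun :
    (X → K) ⧸ Ideal.span {m} ≃+* ({x // m x = 0} → K) :=
  (Ideal.quotEquivOfEq (ker_zeroLocusRestrict m).symm).trans
    (RingHom.quotientKerEquivOfSurjective (zeroLocusRestrict_surjective m))

theorem card_quotient_span_singleton [Finite X] :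
    Nat.card ((X → K) ⧸ Ideal.span {m}) = Nat.card K ^ Nat.card {x // m x = 0} := by
  rw [Nat.card_congr (quotientSpanEquivZeroLocusFun m).toEquiv, Nat.card_fun]

end ZeroLocus

theorem mf_eq_zero_iff {n : ℕ} (f : (Fin n → ZMod 2) → (Fin n → ZMod 2)) (x : Fin n → ZMod 2) :
    mf f x = 0 ↔ f x = x := by
  have one_add_eq_zero : ∀ a : ZMod 2, 1 + a = 0 ↔ a ≠ 0 := by decide
  have add_add_one_ne_zero : ∀ a b : ZMod 2, a + b + 1 ≠ 0 ↔ a = b := by decide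
  simp only [mf, one_add_eq_zero, Finset.prod_ne_zero_iff, Finset.mem_univ, true_implies,
    add_add_one_ne_zero, funext_iff]

theorem stmt_7 (n : ℕ) (f : (Fin n → ZMod 2) → (Fin n → ZMod 2)) :
    Nat.card {x : Fin n → ZMod 2 // f x = x} = 2 ↔
      Nat.card (((Fin n → ZMod 2) → ZMod 2) ⧸ Ideal.span {mf f}) = 4 := by
  have hzeros : Nat.card {x // mf f x = 0} = Nat.card {x : Fin n → ZMod 2 // f x = x} :=
    Nat.card_congr (Equiv.subtypeEquivRight (mf_eq_zero_iff f))
  rw [card_quotient_span_singleton, hzeros, Nat.card_zmod]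
  exact ⟨fun h => by rw [h]; rfl, fun h => Nat.pow_right_injective le_rfl (h.trans (by norm_num))⟩
end

section
/- A Boolean network f on n nodes has exactly the two distinct fixed points a and b if and only if 1 + m_f = p_a + p_b as functions F_2^n → F_2. -/
def pa {n : ℕ} (a : Fin n → ZMod 2) (x : Fin n → ZMod 2) : ZMod 2 :=
  ∏ i, (x i + a i + 1)

/-!
Over `𝔽₂` the factor `u + v + 1` is the indicator of `u = v`, so `p_c` is the indicator of the
point `c` and `1 + m_f` is the indicator of the fixed-point set of `f`. Since `a ≠ b`, the
indicators of `{a}` and `{b}` have disjoint supports and their sum is the indicator of `{a, b}`;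
two indicators agree exactly when the sets do.
-/

namespace ZMod

theorem add_add_one_eq_ite (u v : ZMod 2) : u + v + 1 = if u = v then 1 else 0 := by
  revert u v; decide

theorem prod_add_add_one_eq_ite {ι : Type*} [Fintype ι] (x a : ι → ZMod 2) :
    ∏ i, (x i + a i + 1) = if x = a then 1 else 0 := by
  simp_rw [add_add_one_eq_ite, Finset.prod_ite_zero, Finset.prod_const_one, funext_iff,
    Finset.mem_univ, true_imp_iff]

theorem ite_eq_ite_add_ite_iff {P Q R : Prop} [Decidable P] [Decidable Q] [Decidable R]
    (hQR : ¬(Q ∧ R)) :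
    ((if P then 1 else 0 : ZMod 2) = (if Q then 1 else 0) + (if R then 1 else 0)) ↔
      (P ↔ Q ∨ R) := by
  by_cases P <;> by_cases Q <;> by_cases R <;> simp_all

end ZMod

theorem pa_eq_ite {n : ℕ} (a x : Fin n → ZMod 2) : pa a x = if x = a then 1 else 0 :=
  ZMod.prod_add_add_one_eq_ite x a

theorem one_add_mf_eq_ite {n : ℕ} (f : (Fin n → ZMod 2) → (Fin n → ZMod 2))
    (x : Fin n → ZMod 2) : 1 + mf f x = if f x = x then 1 else 0 := by
  rw [mf, ← add_assoc, ZMod.prod_add_add_one_eq_ite, show (1 + 1 : ZMod 2) = 0 from rfl,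
    zero_add]

theorem stmt_14 (n : ℕ) (f : (Fin n → ZMod 2) → (Fin n → ZMod 2))
    (a b : Fin n → ZMod 2) (hab : a ≠ b) :
    (∀ x, f x = x ↔ (x = a ∨ x = b)) ↔
      ∀ x, 1 + mf f x = pa a x + pa b x := by
  refine forall_congr' fun x => ?_
  rw [one_add_mf_eq_ite, pa_eq_ite, pa_eq_ite, ZMod.ite_eq_ite_add_ite_iff]
  rintro ⟨rfl, rfl⟩
  exact hab rfl
end

section
/- For any Boolean network f on n nodes with fixed point set S, and any functions g, h : F_2^n → F_2 agreeing on S (g(a) = h(a) for all a ∈ S), the difference g + h lies in the ideal I_f generated by m_f. -/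
/-! Off the fixed points `m_f` equals `1`, while on them `g + h` vanishes; hence `g + h = m_f (g + h)`
pointwise. -/

lemma ZMod.add_add_one_eq_zero_of_ne {a b : ZMod 2} (hab : a ≠ b) : a + b + 1 = 0 := by
  revert a b
  decide

lemma mf_eq_one_of_ne {n : ℕ} {f : (Fin n → ZMod 2) → (Fin n → ZMod 2)} {x : Fin n → ZMod 2}
    (hx : f x ≠ x) : mf f x = 1 := by
  obtain ⟨i, hi⟩ : ∃ i, f x i ≠ x i := Function.ne_iff.mp hx
  rw [mf, Finset.prod_eq_zero (Finset.mem_univ i) (ZMod.add_add_one_eq_zero_of_ne hi), add_zero]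

lemma mf_mul_eq_self_of_eq_zero_on_fixedPoints {n : ℕ} (f : (Fin n → ZMod 2) → (Fin n → ZMod 2))
    (k : (Fin n → ZMod 2) → ZMod 2) (hk : ∀ a, f a = a → k a = 0) : mf f * k = k := by
  funext x
  by_cases hx : f x = x
  · simp only [Pi.mul_apply, hk x hx, mul_zero]
  · simp only [Pi.mul_apply, mf_eq_one_of_ne hx, one_mul]

theorem stmt_19 (n : ℕ) (f : (Fin n → ZMod 2) → (Fin n → ZMod 2))
    (g h : (Fin n → ZMod 2) → ZMod 2)
    (hgh : ∀ a : Fin n → ZMod 2, f a = a → g a = h a) :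
    g + h ∈ Ideal.span {mf f} := by
  have hvanish : ∀ a, f a = a → (g + h) a = 0 := fun a ha => by
    rw [Pi.add_apply, hgh a ha, CharTwo.add_self_eq_zero]
  exact Ideal.mem_span_singleton.mpr ⟨g + h, (mf_mul_eq_self_of_eq_zero_on_fixedPoints f _ hvanish).symm⟩
end
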